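/- Let $p$ be an odd prime, $r = 2s+t+u$, and $R_r \le C_2\wr S_{rp}$ the cyclic group of order $p$ generated by $\sigma_1\cdots\sigma_r$. Then the dimension of the Brauer quotient $M_{(2sp,tp,up)}(R_r)$ over a field of characteristic $p$ equals $(2p)^s \cdot \binom{t+u}{t} \cdot c_{s,t+u}$, where $c_{s,k}$ is the number of set partitions of $\{1,\ldots,2s+k\}$ into $s$ unordered pairs together with one distinguished block of size $k$. -/

import Mathlib

/-!
STATEMENT 9: Let `p` be an odd prime, `r = 2s + t + u`, and `R_r ≤ C₂ ≀ S_{rp}` the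
cyclic group of order `p` generated by `σ₁⋯σ_r`.  Then the dimension of the Brauer
quotient `M_{(2sp,tp,up)}(R_r)` over a field of characteristic `p` equals
`(2p)^s · C(t+u,t) · c_{s,t+u}`, where `c_{s,k} = (2s+k)!/(2^s s! k!)`.

`M_{(2sp,tp,up)}` is a `p`-permutation module with (signed) basis `B_{(2sp,tp,up)}`,
whose elements are triples `(g,γ,δ)`: an involution `g` that is a product of `sp`
disjoint positive 2-cycles, together with an assignment of the remaining index pairs
to a `tp`-set `T` (recording `γ`) and a `up`-set `U` (recording `δ`).  By Broué, the
dimension of the Brauer quotient `M(R_r)` equals the number of `R_r`-fixed elements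
of a `p`-permutation basis, and (since `p` is odd) the fixed basis vectors correspond
exactly to the `R_r`-fixed triples `(g,T,U)`.  We realize `C₂ ≀ S_{rp}` on
`(Fin r × Fin p) × Bool` as in the previous statements, with `σ₁⋯σ_r = rotBlocks`,
and state the dimension count in the multiplied-out form
`#fixed · (2^s s! (t+u)!) = (2p)^s · C(t+u,t) · (2s+t+u)!`.
-/

def barPerm (α : Type*) : Equiv.Perm (α × Bool) :=
  Function.Involutive.toPerm (fun x => (x.1, !x.2)) (by intro x; simp)

def rotBlocks (r p : ℕ) : Equiv.Perm ((Fin r × Fin p) × Bool) :=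
  Equiv.prodCongr (Equiv.prodCongr (Equiv.refl (Fin r)) (finRotate p)) (Equiv.refl Bool)

/-- The rotation on the index set `Fin r × Fin p`. -/
def rotIdx (r p : ℕ) : Equiv.Perm (Fin r × Fin p) :=
  Equiv.prodCongr (Equiv.refl (Fin r)) (finRotate p)

/-- The `R_r`-fixed basis elements of `M_{(2sp,tp,up)}`: triples `(g,T,U)` where `g`
is a product of `sp` disjoint positive 2-cycles commuting with `σ₁⋯σ_r`, and the
remaining indices are split into an `rot`-stable `tp`-set `T` and `up`-set `U`. -/
def fixedBasis (p s t u : ℕ) :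
    Set (Equiv.Perm ((Fin (2 * s + t + u) × Fin p) × Bool) ×
      Finset (Fin (2 * s + t + u) × Fin p) × Finset (Fin (2 * s + t + u) × Fin p)) :=
  {gTU |
    gTU.1 ∈ Subgroup.centralizer {barPerm (Fin (2 * s + t + u) × Fin p)} ∧
    gTU.1 * gTU.1 = 1 ∧
    (∀ y, gTU.1 y ≠ barPerm (Fin (2 * s + t + u) × Fin p) y) ∧
    (Finset.univ.filter fun i : Fin (2 * s + t + u) × Fin p =>
        gTU.1 (i, false) ≠ (i, false)).card = 2 * s * p ∧
    gTU.2.1.card = t * p ∧ gTU.2.2.card = u * p ∧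
    Disjoint gTU.2.1 gTU.2.2 ∧
    (∀ i ∈ gTU.2.1, gTU.1 (i, false) = (i, false)) ∧
    (∀ i ∈ gTU.2.2, gTU.1 (i, false) = (i, false)) ∧
    (Finset.univ.filter fun i : Fin (2 * s + t + u) × Fin p =>
        gTU.1 (i, false) ≠ (i, false)) ∪ gTU.2.1 ∪ gTU.2.2 = Finset.univ ∧
    Commute gTU.1 (rotBlocks (2 * s + t + u) p) ∧
    gTU.2.1.image (rotIdx (2 * s + t + u) p) = gTU.2.1 ∧
    gTU.2.2.image (rotIdx (2 * s + t + u) p) = gTU.2.2}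

/-!
Commuting with the sign flip `barPerm` and with the rotation `rotBlocks` forces
`g ((b, j), ε) = ((f b, m b + j), ε xor c b)` for a permutation `f` of the `2s + t + u` blocks,
shifts `m` and signs `c`, and forces the rotation-stable sets `T`, `U` to be unions of whole
blocks. The remaining conditions on `(g, T, U)` say exactly that `f` is an involution with `s`
two-cycles, that `m ∘ f = -m` and `c ∘ f = c`, that `m` and `c` vanish at the fixed blocks (for
`m` this is where `p` odd enters, through `x = -x → x = 0`), and that `T` consists of `t` of the
`t + u` fixed blocks and `U` of the others. There are `(2s+t+u)! / ((t+u)! 2^s s!)` such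
involutions, and for each of them `m` and `c` may be chosen freely on one point of every
two-cycle, giving `p^s · 2^s · C(t+u, t)` choices of the remaining data.
-/

open Equiv Finset

lemma cycleType_eq_replicate_two_iff {α : Type*} [Fintype α] [DecidableEq α] {f : Perm α}
    {s : ℕ} : f.cycleType = Multiset.replicate s 2 ↔ f * f = 1 ∧ #f.support = 2 * s := by
  rw [← sq]
  constructor
  · intro h
    refine ⟨Perm.pow_prime_eq_one_iff.mpr fun k hk => ?_, ?_⟩
    · rw [h] at hk
      exact Multiset.eq_of_mem_replicate hk
    · rw [← Perm.sum_cycleType, h, Multiset.sum_replicate, smul_eq_mul, mul_comm]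
  · rintro ⟨hsq, hcard⟩
    have h := Perm.cycleType_of_pow_prime_eq_one hsq
    rw [← Perm.sum_cycleType, h, Multiset.sum_replicate, smul_eq_mul] at hcard
    rw [h, show Multiset.card f.cycleType = s by omega]

lemma card_cycleType_eq_replicate_two_mul {α : Type*} [Fintype α] [DecidableEq α] {s : ℕ}
    (hs : 2 * s ≤ Fintype.card α) :
    #({f | f.cycleType = Multiset.replicate s 2} : Finset (Perm α)) *
        ((Fintype.card α - 2 * s).factorial * 2 ^ s * s.factorial) =
      (Fintype.card α).factorial := by
  have h := Perm.card_of_cycleType_mul_eq α (Multiset.replicate s 2)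
  rw [if_pos ⟨by simpa [mul_comm] using hs, fun a ha => (Multiset.eq_of_mem_replicate ha).ge⟩]
    at h
  rcases Nat.eq_zero_or_pos s with rfl | hpos
  · simpa using h
  · simpa [Multiset.toFinset_replicate, hpos.ne', mul_comm 2 s] using h

section Involution

variable {α : Type*} [Fintype α] [LinearOrder α]

lemma card_support_eq_two_mul {f : Perm α} (hf : Function.Involutive f) :
    #f.support = 2 * #{b | b < f b} := by
  have hsplit : f.support = ({b | b < f b} : Finset α) ∪ ({b | f b < b} : Finset α) := by
    ext b
    simp only [Perm.mem_support, mem_union, mem_filter, mem_univ, true_and]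
    exact ne_iff_lt_or_gt.trans or_comm
  have hdisj : Disjoint ({b | b < f b} : Finset α) ({b | f b < b} : Finset α) :=
    disjoint_filter.mpr fun b _ (h : b < f b) => h.not_gt
  have hswap : #({b | f b < b} : Finset α) = #{b | b < f b} :=
    card_nbij' f f (fun b hb => by simpa [hf b] using hb) (fun b hb => by simpa [hf b] using hb)
      (fun b _ => hf b) (fun b _ => hf b)
  rw [hsplit, card_union_of_disjoint hdisj, hswap, two_mul]

variable {G : Type*} [Fintype G] [DecidableEq G]

def equivariantFuns (f : Perm α) (ι : G → G) (z : G) : Finset (α → G) :=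
  {m | (∀ b, m (f b) = ι (m b)) ∧ ∀ b, f b = b → m b = z}

/-- The points `b < f b` form a set of representatives of the two-point orbits of `f`. -/
def equivariantFunsEquiv {f : Perm α} (hf : Function.Involutive f) {ι : G → G}
    (hι : Function.Involutive ι) {z : G} (hz : ι z = z) :
    equivariantFuns f ι z ≃ ({b // b < f b} → G) where
  toFun m b := m.1 b
  invFun v := ⟨fun b => if h : b < f b then v ⟨b, h⟩
      else if h' : f b < b then ι (v ⟨f b, by rwa [hf b]⟩) else z, by
    simp only [equivariantFuns, mem_filter, mem_univ, true_and]
    refine ⟨fun b => ?_, fun b hb => by simp [hb]⟩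
    rcases lt_trichotomy b (f b) with h | h | h
    · simp [h, hf b, h.not_gt]
    · simpa [← h] using hz.symm
    · simp [h, hf b, h.not_gt, hι _]⟩
  left_inv m := by
    obtain ⟨m, hm⟩ := m
    simp only [equivariantFuns, mem_filter, mem_univ, true_and] at hm
    ext b
    rcases lt_trichotomy b (f b) with h | h | h
    · simp [h]
    · simp [← h, hm.2 b h.symm]
    · simp [h, h.not_gt, hm.1, hι _]
  right_inv v := by
    ext b
    simp [b.2]

lemma card_equivariantFuns {f : Perm α} (hf : Function.Involutive f) {ι : G → G}
    (hι : Function.Involutive ι) {z : G} (hz : ι z = z) :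
    #(equivariantFuns f ι z) = Fintype.card G ^ #{b | b < f b} := by
  rw [← Fintype.card_coe, Fintype.card_congr (equivariantFunsEquiv hf hι hz), Fintype.card_fun,
    Fintype.card_subtype]

end Involution

lemma eq_zero_of_eq_neg_of_odd_card {G : Type*} [AddGroup G] (hodd : Odd (Nat.card G)) {x : G}
    (h : x = -x) : x = 0 := by
  apply (Nat.coprime_two_right.mpr hodd).nsmul_right_bijective.injective
  simpa [two_nsmul] using add_eq_zero_iff_eq_neg.mpr h

section Splits

variable {α : Type*} [DecidableEq α]

def splits (F : Finset α) (t : ℕ) : Finset (Finset α × Finset α) :=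
  (F.powersetCard t).image fun T => (T, F \ T)

lemma card_splits (F : Finset α) (t : ℕ) : #(splits F t) = (#F).choose t := by
  rw [splits, card_image_of_injective _ fun T T' h => congrArg Prod.fst h, card_powersetCard]

lemma card_of_mem_splits {F T U : Finset α} {t : ℕ} (h : (T, U) ∈ splits F t) :
    #U = #F - t := by
  obtain ⟨⟨hTF, rfl⟩, rfl⟩ := by simpa [splits] using h
  rw [card_sdiff_of_subset hTF]

lemma mem_splits_iff [Fintype α] {F T U : Finset α} {t : ℕ} :
    (T, U) ∈ splits F t ↔
      Disjoint T U ∧ T ⊆ F ∧ U ⊆ F ∧ Fᶜ ∪ T ∪ U = univ ∧ #T = t := by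
  simp only [splits, mem_image, mem_powersetCard, Prod.mk.injEq]
  constructor
  · rintro ⟨T, ⟨hTF, rfl⟩, rfl, rfl⟩
    refine ⟨disjoint_sdiff, hTF, sdiff_subset, ?_, rfl⟩
    ext b
    by_cases hb : b ∈ F <;> by_cases hb' : b ∈ T <;> simp [hb, hb']
  · rintro ⟨hdisj, hTF, hUF, hcover, rfl⟩
    refine ⟨T, ⟨hTF, rfl⟩, rfl, ?_⟩
    ext b
    have hb : b ∈ Fᶜ ∪ T ∪ U := hcover ▸ mem_univ b
    have : b ∈ T → b ∉ U := fun h => disjoint_left.mp hdisj h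
    have : b ∈ U → b ∈ F := fun h => hUF h
    simp only [mem_union, mem_compl] at hb
    simp only [mem_sdiff]
    tauto

end Splits

section ProductUniv

variable {α β : Type*} [Fintype β] [Nonempty β]

lemma product_univ_injective : Function.Injective fun S : Finset α => S ×ˢ (univ : Finset β) := by
  intro S S' h
  obtain ⟨y⟩ := ‹Nonempty β›
  ext x
  simpa using congrArg ((x, y) ∈ ·) h

lemma disjoint_product_univ_iff {S S' : Finset α} :
    Disjoint (S ×ˢ (univ : Finset β)) (S' ×ˢ univ) ↔ Disjoint S S' := by
  rw [disjoint_product, disjoint_self, bot_eq_empty, or_iff_left univ_nonempty.ne_empty]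

lemma product_univ_cover_iff [Fintype α] [DecidableEq α] [DecidableEq β] {F T U : Finset α} :
    F ×ˢ (univ : Finset β) ∪ T ×ˢ univ ∪ U ×ˢ univ = univ ↔ F ∪ T ∪ U = univ := by
  rw [← union_product, ← union_product, ← univ_product_univ]
  exact product_univ_injective.eq_iff

end ProductUniv

lemma card_product_univ_eq_mul_iff {α : Type*} {p : ℕ} [NeZero p] {S : Finset α} {k : ℕ} :
    #(S ×ˢ (univ : Finset (Fin p))) = k * p ↔ #S = k := by
  rw [card_product, card_univ, Fintype.card_fin, Nat.mul_left_inj (NeZero.ne p)]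

@[simp] lemma barPerm_apply {α : Type*} (x : α × Bool) : barPerm α x = (x.1, !x.2) := rfl

section Blocks

variable {n p : ℕ} [NeZero p]

@[simp] lemma rotBlocks_apply (x : (Fin n × Fin p) × Bool) :
    rotBlocks n p x = ((x.1.1, x.1.2 + 1), x.2) := by
  obtain ⟨⟨b, j⟩, ε⟩ := x
  simp [rotBlocks]

@[simp] lemma rotIdx_apply (x : Fin n × Fin p) : rotIdx n p x = (x.1, x.2 + 1) := by
  obtain ⟨b, j⟩ := x
  simp [rotIdx]

open Fin.NatCast in
lemma rotBlocks_pow_apply (k : ℕ) (x : (Fin n × Fin p) × Bool) :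
    (rotBlocks n p ^ k) x = ((x.1.1, x.1.2 + k), x.2) := by
  induction k with
  | zero => simp
  | succ k ih => simp [pow_succ', ih, add_assoc]

open Fin.NatCast in
lemma rotIdx_pow_apply (k : ℕ) (x : Fin n × Fin p) : (rotIdx n p ^ k) x = (x.1, x.2 + k) := by
  induction k with
  | zero => simp
  | succ k ih => simp [pow_succ', ih, add_assoc]

lemma image_rotIdx_product_univ (S : Finset (Fin n)) :
    (S ×ˢ univ).image (rotIdx n p) = S ×ˢ univ := by
  ext ⟨b, j⟩
  simp only [mem_image, mem_product, mem_univ, and_true, Prod.exists, rotIdx_apply,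
    Prod.mk.injEq]
  exact ⟨fun ⟨_, _, hb, hb', _⟩ => hb' ▸ hb, fun hb => ⟨b, j - 1, hb, rfl, sub_add_cancel j 1⟩⟩

open Fin.NatCast in
lemma eq_image_fst_product_univ_of_image_rotIdx {T : Finset (Fin n × Fin p)}
    (hT : T.image (rotIdx n p) = T) : T = T.image Prod.fst ×ˢ univ := by
  have hpow : ∀ k : ℕ, ∀ x ∈ T, (rotIdx n p ^ k) x ∈ T := by
    intro k
    induction k with
    | zero => simp
    | succ k ih =>
      intro x hx
      rw [pow_succ', Perm.mul_apply, ← hT]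
      exact mem_image_of_mem _ (ih x hx)
  ext ⟨b, j⟩
  simp only [mem_product, mem_image, mem_univ, and_true, Prod.exists, exists_and_right,
    exists_eq_right]
  refine ⟨fun h => ⟨j, h⟩, fun ⟨j', h⟩ => ?_⟩
  simpa [rotIdx_pow_apply] using hpow (j - j').val _ h

def blockPerm (f : Perm (Fin n)) (m : Fin n → Fin p) (c : Fin n → Bool) :
    Perm ((Fin n × Fin p) × Bool) where
  toFun x := ((f x.1.1, m x.1.1 + x.1.2), xor x.2 (c x.1.1))
  invFun x := ((f⁻¹ x.1.1, x.1.2 - m (f⁻¹ x.1.1)), xor x.2 (c (f⁻¹ x.1.1)))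
  left_inv x := by simp
  right_inv x := by simp

open Fin.NatCast in
lemma exists_eq_blockPerm {g : Perm ((Fin n × Fin p) × Bool)}
    (hbar : Commute g (barPerm (Fin n × Fin p))) (hrot : Commute g (rotBlocks n p)) :
    ∃ f m c, g = blockPerm f m c := by
  set F : Fin n → Fin n := fun b => (g ((b, 0), false)).1.1
  set M : Fin n → Fin p := fun b => (g ((b, 0), false)).1.2
  set C : Fin n → Bool := fun b => (g ((b, 0), false)).2
  have hfalse : ∀ b j, g ((b, j), false) = ((F b, M b + j), C b) := fun b j => by
    have h := Perm.ext_iff.mp (hrot.pow_right j.val) ((b, 0), false)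
    simpa [rotBlocks_pow_apply] using h
  have hg : ∀ x, g x = ((F x.1.1, M x.1.1 + x.1.2), xor x.2 (C x.1.1)) := by
    rintro ⟨⟨b, j⟩, _ | _⟩
    · simpa using hfalse b j
    · simpa [hfalse] using Perm.ext_iff.mp hbar ((b, j), false)
  have hinj : Function.Injective F := fun b b' h => by
    have hy : g ((b', M b - M b'), xor (C b) (C b')) = g ((b, 0), false) := by
      rw [hg, hg]
      simp [← h]
    exact (congrArg (·.1.1) (g.injective hy)).symm
  exact ⟨Equiv.ofBijective F (Finite.injective_iff_bijective.mp hinj), M, C, Equiv.ext hg⟩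

variable {f f' : Perm (Fin n)} {m m' : Fin n → Fin p} {c c' : Fin n → Bool}

@[simp] lemma blockPerm_apply (x : (Fin n × Fin p) × Bool) :
    blockPerm f m c x = ((f x.1.1, m x.1.1 + x.1.2), xor x.2 (c x.1.1)) := rfl

lemma blockPerm_inj : blockPerm f m c = blockPerm f' m' c' ↔ f = f' ∧ m = m' ∧ c = c' := by
  refine ⟨fun h => ?_, by rintro ⟨rfl, rfl, rfl⟩; rfl⟩
  have key : ∀ b, f b = f' b ∧ m b = m' b ∧ c b = c' b := fun b => by
    simpa [and_assoc] using congrArg (· ((b, 0), false)) h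
  exact ⟨Equiv.ext fun b => (key b).1, funext fun b => (key b).2.1, funext fun b => (key b).2.2⟩

lemma commute_blockPerm_barPerm : Commute (blockPerm f m c) (barPerm (Fin n × Fin p)) :=
  Equiv.ext fun x => by simp

lemma commute_blockPerm_rotBlocks : Commute (blockPerm f m c) (rotBlocks n p) :=
  Equiv.ext fun x => by simp [add_assoc]

lemma blockPerm_mul_self_eq_one_iff :
    blockPerm f m c * blockPerm f m c = 1 ↔
      f * f = 1 ∧ (∀ b, m (f b) = -m b) ∧ ∀ b, c (f b) = c b := by
  constructor
  · intro h
    have key : ∀ b, f (f b) = b ∧ m (f b) + m b = 0 ∧ c (f b) = c b := fun b => by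
      simpa [and_assoc, eq_comm (a := c b)] using congrArg (· ((b, 0), false)) h
    exact ⟨Equiv.ext fun b => (key b).1, fun b => eq_neg_of_add_eq_zero_left (key b).2.1,
      fun b => (key b).2.2⟩
  · rintro ⟨hf, hm, hc⟩
    ext x <;> simp [← Perm.mul_apply, hf, hm, hc]

lemma blockPerm_apply_false_eq_self_iff (b : Fin n) (j : Fin p) :
    blockPerm f m c ((b, j), false) = ((b, j), false) ↔ f b = b ∧ m b = 0 ∧ c b = false := by
  simp [and_assoc]

lemma blockPerm_ne_barPerm_iff :
    (∀ y, blockPerm f m c y ≠ barPerm _ y) ↔ ∀ b, f b = b → m b = 0 → c b = false := by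
  constructor
  · intro h b hf hm
    simpa [hf, hm] using h ((b, 0), false)
  · rintro h ⟨⟨b, j⟩, ε⟩ hy
    simp only [blockPerm_apply, barPerm_apply, Prod.mk.injEq, add_eq_right] at hy
    obtain ⟨⟨hf, hm⟩, hε⟩ := hy
    cases ε <;> simp_all

lemma filter_blockPerm_ne_eq (hm : ∀ b, f b = b → m b = 0) (hc : ∀ b, f b = b → c b = false) :
    ({i | blockPerm f m c (i, false) ≠ (i, false)} : Finset (Fin n × Fin p)) =
      f.support ×ˢ univ := by
  ext ⟨b, j⟩
  simp only [mem_filter, mem_univ, true_and, ne_eq, blockPerm_apply_false_eq_self_iff,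
    mem_product, and_true, Perm.mem_support]
  exact ⟨fun h hb => h ⟨hb, hm b hb, hc b hb⟩, fun h h' => h h'.1⟩

lemma forall_blockPerm_apply_eq_self_iff_subset (hm : ∀ b, f b = b → m b = 0)
    (hc : ∀ b, f b = b → c b = false) {S : Finset (Fin n)} :
    (∀ i ∈ S ×ˢ (univ : Finset (Fin p)), blockPerm f m c (i, false) = (i, false)) ↔
      S ⊆ f.supportᶜ := by
  constructor
  · intro h b hb
    simpa using (blockPerm_apply_false_eq_self_iff b 0).mp (h (b, 0) (by simpa using hb)) |>.1
  · rintro h ⟨b, j⟩ hb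
    have hfb : f b = b := by simpa using h (mem_product.mp hb).1
    exact (blockPerm_apply_false_eq_self_iff b j).mpr ⟨hfb, hm b hfb, hc b hfb⟩

end Blocks

section BlockData

variable {n p : ℕ} [NeZero p]

abbrev BlockDatum (n p : ℕ) :=
  Σ _ : Perm (Fin n), (Fin n → Fin p) × (Fin n → Bool) × Finset (Fin n) × Finset (Fin n)

variable (n p) in
def blockData (s t : ℕ) : Finset (BlockDatum n p) :=
  ({f | f.cycleType = Multiset.replicate s 2} : Finset (Perm (Fin n))).sigma fun f =>
    equivariantFuns f Neg.neg 0 ×ˢ equivariantFuns f id false ×ˢ splits f.supportᶜ t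

def blockBasis (x : BlockDatum n p) :
    Perm ((Fin n × Fin p) × Bool) × Finset (Fin n × Fin p) × Finset (Fin n × Fin p) :=
  (blockPerm x.1 x.2.1 x.2.2.1, x.2.2.2.1 ×ˢ univ, x.2.2.2.2 ×ˢ univ)

lemma blockBasis_injective : Function.Injective (blockBasis (n := n) (p := p)) := by
  rintro ⟨f, m, c, T, U⟩ ⟨f', m', c', T', U'⟩ h
  simp only [blockBasis, Prod.mk.injEq, blockPerm_inj] at h
  obtain ⟨⟨rfl, rfl, rfl⟩, hT, hU⟩ := h
  rw [product_univ_injective hT, product_univ_injective hU]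

lemma card_blockData (s t : ℕ) :
    #(blockData n p s t) =
      #({f | f.cycleType = Multiset.replicate s 2} : Finset (Perm (Fin n))) *
        (p ^ s * (2 ^ s * (n - 2 * s).choose t)) := by
  rw [blockData, card_sigma, ← smul_eq_mul, ← sum_const]
  refine sum_congr rfl fun f hf => ?_
  obtain ⟨hsq, hsupp⟩ := cycleType_eq_replicate_two_iff.mp (mem_filter.mp hf).2
  have hinv : Function.Involutive f := fun b => by simpa using Perm.ext_iff.mp hsq b
  have hpairs : #{b | b < f b} = s := by
    have := card_support_eq_two_mul hinv
    omega
  rw [card_product, card_product, card_equivariantFuns hinv neg_involutive neg_zero,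
    card_equivariantFuns hinv (fun _ => rfl) rfl, card_splits, card_compl, hsupp,
    hpairs, Fintype.card_fin, Fintype.card_fin, Fintype.card_bool]

end BlockData

section FixedBasis

variable {p s t u : ℕ} [NeZero p]

lemma mem_fixedBasis_blockBasis_iff (hodd : Odd p) (x : BlockDatum (2 * s + t + u) p) :
    blockBasis x ∈ fixedBasis p s t u ↔ x ∈ blockData (2 * s + t + u) p s t := by
  obtain ⟨f, m, c, T, U⟩ := x
  conv_rhs => simp only [blockData, mem_sigma, mem_filter, mem_univ, true_and, mem_product,
    equivariantFuns, id, cycleType_eq_replicate_two_iff]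
  simp only [fixedBasis, blockBasis, Set.mem_ofPred_eq]
  constructor
  · rintro ⟨-, hsq, hbar, hmoved, hT, -, hdisj, hTfix, hUfix, hcover, -, -, -⟩
    obtain ⟨hf, hm, hc⟩ := blockPerm_mul_self_eq_one_iff.mp hsq
    have hm0 : ∀ b, f b = b → m b = 0 := fun b hb =>
      eq_zero_of_eq_neg_of_odd_card (by simpa using hodd) (by simpa [hb] using hm b)
    have hc0 : ∀ b, f b = b → c b = false := fun b hb =>
      blockPerm_ne_barPerm_iff.mp hbar b hb (hm0 b hb)
    rw [filter_blockPerm_ne_eq hm0 hc0] at hmoved hcover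
    rw [card_product_univ_eq_mul_iff] at hmoved
    refine ⟨⟨hf, hmoved⟩, ⟨hm, hm0⟩, ⟨hc, hc0⟩, mem_splits_iff.mpr
      ⟨disjoint_product_univ_iff.mp hdisj,
        (forall_blockPerm_apply_eq_self_iff_subset hm0 hc0).mp hTfix,
        (forall_blockPerm_apply_eq_self_iff_subset hm0 hc0).mp hUfix, ?_,
        card_product_univ_eq_mul_iff.mp hT⟩⟩
    rwa [compl_compl, ← product_univ_cover_iff (β := Fin p)]
  · rintro ⟨⟨hf, hsupp⟩, ⟨hm, hm0⟩, ⟨hc, hc0⟩, hsplit⟩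
    obtain ⟨hdisj, hTfix, hUfix, hcover, hT⟩ := mem_splits_iff.mp hsplit
    have hU : #U = u := by
      rw [card_of_mem_splits hsplit, card_compl, hsupp, Fintype.card_fin]
      omega
    refine ⟨Subgroup.mem_centralizer_singleton_iff.mpr commute_blockPerm_barPerm,
      blockPerm_mul_self_eq_one_iff.mpr ⟨hf, hm, hc⟩,
      blockPerm_ne_barPerm_iff.mpr fun b hb _ => hc0 b hb, ?_,
      card_product_univ_eq_mul_iff.mpr hT, card_product_univ_eq_mul_iff.mpr hU,
      disjoint_product_univ_iff.mpr hdisj,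
      (forall_blockPerm_apply_eq_self_iff_subset hm0 hc0).mpr hTfix,
      (forall_blockPerm_apply_eq_self_iff_subset hm0 hc0).mpr hUfix, ?_,
      commute_blockPerm_rotBlocks, image_rotIdx_product_univ T, image_rotIdx_product_univ U⟩
    · rw [filter_blockPerm_ne_eq hm0 hc0, card_product_univ_eq_mul_iff, hsupp]
    · rw [filter_blockPerm_ne_eq hm0 hc0, product_univ_cover_iff, ← hcover, compl_compl]

lemma exists_blockBasis_eq_of_mem_fixedBasis {y} (hy : y ∈ fixedBasis p s t u) :
    ∃ x : BlockDatum (2 * s + t + u) p, blockBasis x = y := by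
  obtain ⟨g, T, U⟩ := y
  obtain ⟨hbar, -, -, -, -, -, -, -, -, -, hrot, hT, hU⟩ := hy
  obtain ⟨f, m, c, rfl⟩ :=
    exists_eq_blockPerm (Subgroup.mem_centralizer_singleton_iff.mp hbar) hrot
  exact ⟨⟨f, m, c, T.image Prod.fst, U.image Prod.fst⟩, by
    simp only [blockBasis, ← eq_image_fst_product_univ_of_image_rotIdx hT,
      ← eq_image_fst_product_univ_of_image_rotIdx hU]⟩

lemma fixedBasis_eq_image_blockBasis (hodd : Odd p) :
    fixedBasis p s t u = (blockData (2 * s + t + u) p s t).image blockBasis := by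
  ext y
  simp only [coe_image, Set.mem_image, mem_coe]
  constructor
  · intro hy
    obtain ⟨x, rfl⟩ := exists_blockBasis_eq_of_mem_fixedBasis hy
    exact ⟨x, (mem_fixedBasis_blockBasis_iff hodd x).mp hy, rfl⟩
  · rintro ⟨x, hx, rfl⟩
    exact (mem_fixedBasis_blockBasis_iff hodd x).mpr hx

end FixedBasis

theorem dim_brauer_quotient_general (p s t u : ℕ) (hodd : Odd p) :
    Nat.card (fixedBasis p s t u) * (2 ^ s * s.factorial * (t + u).factorial) =
      (2 * p) ^ s * (t + u).choose t * (2 * s + (t + u)).factorial := by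
  have : NeZero p := ⟨hodd.pos.ne'⟩
  have hinv := card_cycleType_eq_replicate_two_mul (α := Fin (2 * s + t + u)) (s := s)
    (by simp only [Fintype.card_fin]; omega)
  simp only [Fintype.card_fin, show 2 * s + t + u - 2 * s = t + u by omega] at hinv
  rw [fixedBasis_eq_image_blockBasis hodd, Nat.card_coe_set_eq, Set.ncard_coe_finset,
    card_image_of_injective _ blockBasis_injective, card_blockData,
    show 2 * s + t + u - 2 * s = t + u by omega, show 2 * s + (t + u) = 2 * s + t + u by omega,
    ← hinv]
  ring

/-- `dim M_{(2sp,tp,up)}(R_r) = (2p)^s · C(t+u,t) · c_{s,t+u}` where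
`c_{s,k} = (2s+k)!/(2^s s! k!)`, stated in multiplied-out form. -/
theorem dim_brauer_quotient (p s t u : ℕ) (hp : p.Prime) (hodd : Odd p) :
    Nat.card (fixedBasis p s t u) * (2 ^ s * s.factorial * (t + u).factorial) =
      (2 * p) ^ s * (t + u).choose t * (2 * s + (t + u)).factorial :=
  dim_brauer_quotient_general p s t u hodd
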